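/- (Theorem C_d) Let f_k satisfy: ‖∂f_k/∂k(y)‖₂ ≤ M for all y, and S_k(x) := ∑_{i=1}^∞ ‖[F_k^i(x)]^{-1}‖₂ ≤ σ_k for every point x whose orbit has invertible Jacobian cocycle. Then for every such x and every N ≥ 1, the largest eigenvalue λ̃_N^{(d+1)}(x,k) of the covariance matrix Γ̃_N(x,k) = C̃_N(x,k)^{-1} satisfies λ̃_N^{(d+1)}(x,k) ≥ 1/((Mσ_k)²(N+1)). -/

import Mathlib

/-!
The vector `ṽ = (L, -1)` is almost a null direction of every augmented Jacobian: by the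
variation-of-constants formula `∂f^n/∂k = F^n (L_n)` with `L_n` the `n`-th partial sum of `L`, and
the cocycle property turns `F^n (L_N - L_n)` into a partial sum of `L` at the point `f^n(x)`, whose
norm is at most `Mσ`. Hence `ṽᵀ C̃_N ṽ ≤ (Mσ)² (N+1)` while `|ṽ|² ≥ 1`, so the smallest
eigenvalue of `C̃_N` is at most `(Mσ)² (N+1)`, and its inverse is an eigenvalue of `Γ̃_N = C̃_N⁻¹`.
-/

open Matrix

/-- The operator norm on real matrices induced by the Euclidean (ℓ²) norm. -/
noncomputable def opNorm {n : Type*} [Fintype n] [DecidableEq n]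
    (P : Matrix n n ℝ) : ℝ :=
  ‖(Matrix.toEuclideanCLM (𝕜 := ℝ) P : EuclideanSpace ℝ n →L[ℝ] EuclideanSpace ℝ n)‖

/-- The Euclidean norm of a vector. -/
noncomputable def vnorm {n : Type*} [Fintype n] (v : n → ℝ) : ℝ :=
  Real.sqrt (∑ i, v i ^ 2)

/-- The Jacobian cocycle `F_k^n(y)` of `f = f_k` at the point `y`: the product of the
one-step Jacobians `F = F_k` along the orbit of `y`, latest on the left. -/
def jacCoc {d : ℕ} (F : (Fin d → ℝ) → Matrix (Fin d) (Fin d) ℝ)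
    (f : (Fin d → ℝ) → (Fin d → ℝ)) (y : Fin d → ℝ) : ℕ → Matrix (Fin d) (Fin d) ℝ
  | 0 => 1
  | (n + 1) => F (f^[n] y) * jacCoc F f y n

/-- The derivative `∂f_k^n/∂k(x)` defined by the recursion
`∂f_k^{n+1}/∂k(x) = F_k(f_k^n(x)) ∂f_k^n/∂k(x) + ∂f_k/∂k(f_k^n(x))`. -/
def parDer {d : ℕ} (F : (Fin d → ℝ) → Matrix (Fin d) (Fin d) ℝ)
    (f : (Fin d → ℝ) → (Fin d → ℝ)) (w : (Fin d → ℝ) → (Fin d → ℝ))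
    (x : Fin d → ℝ) : ℕ → Fin d → ℝ
  | 0 => 0
  | (n + 1) => (F (f^[n] x)).mulVec (parDer F f w x n) + w (f^[n] x)

/-- The augmented `d × (d+1)` Jacobian `F̃_k^n(x) = [F_k^n(x) | ∂f_k^n/∂k(x)]`. -/
def augment {d : ℕ} (F : Matrix (Fin d) (Fin d) ℝ) (w : Fin d → ℝ) :
    Matrix (Fin d) (Fin d ⊕ Unit) ℝ :=
  Matrix.of fun i j => Sum.elim (fun j' => F i j') (fun _ => w i) j

/-- The normal matrix `C̃_N(x,k) = ∑_{n=0}^N F̃_k^n(x)ᵀ F̃_k^n(x)`. -/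
noncomputable def normalMatrix {d : ℕ} (F : (Fin d → ℝ) → Matrix (Fin d) (Fin d) ℝ)
    (f : (Fin d → ℝ) → (Fin d → ℝ)) (w : (Fin d → ℝ) → (Fin d → ℝ))
    (x : Fin d → ℝ) (N : ℕ) : Matrix (Fin d ⊕ Unit) (Fin d ⊕ Unit) ℝ :=
  ∑ n ∈ Finset.range (N + 1),
    (augment (jacCoc F f x n) (parDer F f w x n))ᵀ * augment (jacCoc F f x n) (parDer F f w x n)

section Euclidean

variable {n : Type*} [Fintype n]

lemma vnorm_eq_norm_toLp (u : n → ℝ) : vnorm u = ‖WithLp.toLp 2 u‖ := by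
  simp [vnorm, EuclideanSpace.norm_eq, Real.norm_eq_abs, sq_abs]

lemma vnorm_nonneg (u : n → ℝ) : 0 ≤ vnorm u := Real.sqrt_nonneg _

lemma vnorm_sum_le {ι : Type*} (s : Finset ι) (g : ι → n → ℝ) :
    vnorm (∑ i ∈ s, g i) ≤ ∑ i ∈ s, vnorm (g i) := by
  simpa only [vnorm_eq_norm_toLp, WithLp.toLp_sum] using norm_sum_le s fun i => WithLp.toLp 2 (g i)

lemma vnorm_mulVec_le [DecidableEq n] (P : Matrix n n ℝ) (u : n → ℝ) :
    vnorm (P *ᵥ u) ≤ opNorm P * vnorm u := by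
  simpa only [vnorm_eq_norm_toLp, opNorm, Matrix.toEuclideanCLM_toLp] using
    (Matrix.toEuclideanCLM (𝕜 := ℝ) P).le_opNorm (WithLp.toLp 2 u)

lemma dotProduct_self_eq_vnorm_sq (u : n → ℝ) : u ⬝ᵥ u = vnorm u ^ 2 := by
  rw [vnorm, Real.sq_sqrt (Finset.sum_nonneg fun i _ => sq_nonneg _)]
  simp [dotProduct, sq]

end Euclidean

section Cocycle

variable {d : ℕ} (F : (Fin d → ℝ) → Matrix (Fin d) (Fin d) ℝ)
  (f : (Fin d → ℝ) → (Fin d → ℝ)) (w : (Fin d → ℝ) → (Fin d → ℝ))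

lemma jacCoc_add (x : Fin d → ℝ) (n : ℕ) :
    ∀ m, jacCoc F f (f^[n] x) m * jacCoc F f x n = jacCoc F f x (n + m)
  | 0 => by simp [jacCoc]
  | m + 1 => by
    rw [jacCoc, mul_assoc, jacCoc_add x n m, ← Function.iterate_add_apply, Nat.add_comm m n]
    rfl

lemma isUnit_jacCoc_iterate {x : Fin d → ℝ} (hx : ∀ n, IsUnit (jacCoc F f x n)) (n m : ℕ) :
    IsUnit (jacCoc F f (f^[n] x) m) :=
  (IsUnit.mul_iff.mp (jacCoc_add F f x n m ▸ hx (n + m))).1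

/-- The partial sums `∑_{i=1}^m [F^i(x)]⁻¹ ∂f/∂k(f^{i-1}(x))` of the series `L(x,k)`. -/
noncomputable def partialL (x : Fin d → ℝ) (m : ℕ) : Fin d → ℝ :=
  ∑ i ∈ Finset.range m, (jacCoc F f x (i + 1))⁻¹ *ᵥ w (f^[i] x)

lemma partialL_add (x : Fin d → ℝ) (n m : ℕ) :
    partialL F f w x (n + m) =
      partialL F f w x n + (jacCoc F f x n)⁻¹ *ᵥ partialL F f w (f^[n] x) m := by
  rw [partialL, Finset.sum_range_add, partialL, partialL, Matrix.mulVec_sum]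
  congr 1
  refine Finset.sum_congr rfl fun j _ => ?_
  rw [Matrix.mulVec_mulVec, ← Matrix.mul_inv_rev, jacCoc_add, ← Function.iterate_add_apply,
    Nat.add_assoc, Nat.add_comm j n]

lemma parDer_eq_jacCoc_mulVec_partialL {x : Fin d → ℝ} (hx : ∀ n, IsUnit (jacCoc F f x n))
    (n : ℕ) : parDer F f w x n = jacCoc F f x n *ᵥ partialL F f w x n := by
  induction n with
  | zero => simp [parDer, partialL]
  | succ n ih =>
    rw [parDer, ih, partialL, partialL, Finset.sum_range_succ, Matrix.mulVec_add,
      Matrix.mulVec_mulVec, Matrix.mulVec_mulVec, ← jacCoc,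
      Matrix.mul_nonsing_inv _ ((Matrix.isUnit_iff_isUnit_det _).1 (hx (n + 1))),
      Matrix.one_mulVec]

lemma vnorm_partialL_le {M σ : ℝ} (hM : ∀ y, vnorm (w y) ≤ M) (x : Fin d → ℝ) (m : ℕ)
    (hσ : ∑ i ∈ Finset.range m, opNorm ((jacCoc F f x (i + 1))⁻¹) ≤ σ) :
    vnorm (partialL F f w x m) ≤ M * σ := by
  have hM0 : 0 ≤ M := (vnorm_nonneg _).trans (hM x)
  calc vnorm (partialL F f w x m)
      ≤ ∑ i ∈ Finset.range m, vnorm ((jacCoc F f x (i + 1))⁻¹ *ᵥ w (f^[i] x)) := vnorm_sum_le _ _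
    _ ≤ ∑ i ∈ Finset.range m, opNorm ((jacCoc F f x (i + 1))⁻¹) * M :=
        Finset.sum_le_sum fun i _ => (vnorm_mulVec_le _ _).trans
          (mul_le_mul_of_nonneg_left (hM _) (norm_nonneg _))
    _ ≤ M * σ := by rw [← Finset.sum_mul, mul_comm]; exact mul_le_mul_of_nonneg_left hσ hM0

/-- The test vector `(L_N(x), -1)`, the paper's `ṽ` before normalisation. -/
noncomputable def testVector (x : Fin d → ℝ) (N : ℕ) : Fin d ⊕ Unit → ℝ :=
  Sum.elim (partialL F f w x N) fun _ => -1

lemma one_le_dotProduct_testVector (x : Fin d → ℝ) (N : ℕ) :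
    1 ≤ testVector F f w x N ⬝ᵥ testVector F f w x N := by
  rw [dotProduct, Fintype.sum_sum_type]
  simpa [testVector] using Finset.sum_nonneg fun i _ => mul_self_nonneg (partialL F f w x N i)

lemma augment_mulVec_sum_elim (A : Matrix (Fin d) (Fin d) ℝ) (u L : Fin d → ℝ) :
    augment A u *ᵥ Sum.elim L (fun _ => -1) = A *ᵥ L - u := by
  funext i
  simp [augment, Matrix.mulVec, dotProduct, Fintype.sum_sum_type, sub_eq_add_neg]

lemma augment_mulVec_testVector {x : Fin d → ℝ} (hx : ∀ n, IsUnit (jacCoc F f x n))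
    {n N : ℕ} (hn : n ≤ N) :
    augment (jacCoc F f x n) (parDer F f w x n) *ᵥ testVector F f w x N =
      partialL F f w (f^[n] x) (N - n) := by
  rw [testVector, augment_mulVec_sum_elim, parDer_eq_jacCoc_mulVec_partialL F f w hx,
    ← Nat.add_sub_cancel' hn, partialL_add, Nat.add_sub_cancel_left, Matrix.mulVec_add,
    add_sub_cancel_left, Matrix.mulVec_mulVec,
    Matrix.mul_nonsing_inv _ ((Matrix.isUnit_iff_isUnit_det _).1 (hx n)), Matrix.one_mulVec]

lemma dotProduct_normalMatrix_mulVec (x : Fin d → ℝ) (N : ℕ) (v : Fin d ⊕ Unit → ℝ) :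
    v ⬝ᵥ (normalMatrix F f w x N *ᵥ v) =
      ∑ n ∈ Finset.range (N + 1), vnorm (augment (jacCoc F f x n) (parDer F f w x n) *ᵥ v) ^ 2 := by
  rw [normalMatrix, Matrix.sum_mulVec, dotProduct_sum]
  refine Finset.sum_congr rfl fun n _ => ?_
  rw [← Matrix.mulVec_mulVec, Matrix.dotProduct_mulVec, Matrix.vecMul_transpose,
    dotProduct_self_eq_vnorm_sq]

end Cocycle

section Spectral

variable {n : Type*} [Fintype n] [DecidableEq n]

lemma Matrix.IsHermitian.eigenvalues_mul_dotProduct_self_le {A : Matrix n n ℝ}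
    (hA : A.IsHermitian) {i : n} (hmin : ∀ j, hA.eigenvalues i ≤ hA.eigenvalues j)
    (v : n → ℝ) : hA.eigenvalues i * (v ⬝ᵥ v) ≤ v ⬝ᵥ (A *ᵥ v) := by
  set U : Matrix n n ℝ := (hA.eigenvectorUnitary : Matrix n n ℝ)
  have hstar : star U = Uᵀ := by
    rw [Matrix.star_eq_conjTranspose, Matrix.conjTranspose_eq_transpose_of_trivial]
  have hUUt : U * Uᵀ = 1 := hstar ▸ Matrix.mem_unitaryGroup_iff.mp hA.eigenvectorUnitary.2
  set y : n → ℝ := Uᵀ *ᵥ v with hy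
  have hyy : y ⬝ᵥ y = v ⬝ᵥ v := by
    rw [hy, Matrix.dotProduct_mulVec, Matrix.vecMul_transpose, Matrix.mulVec_mulVec, hUUt,
      Matrix.one_mulVec]
  have hAv : v ⬝ᵥ (A *ᵥ v) = ∑ j, hA.eigenvalues j * (y j * y j) := by
    conv_lhs => rw [hA.spectral_theorem, Unitary.conjStarAlgAut_apply, hstar,
      ← Matrix.mulVec_mulVec, ← Matrix.mulVec_mulVec, Matrix.dotProduct_mulVec,
      ← Matrix.mulVec_transpose, ← hy]
    simp only [dotProduct, Matrix.mulVec_diagonal, Function.comp_apply,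
      RCLike.ofReal_real_eq_id, id_eq]
    exact Finset.sum_congr rfl fun j _ => by ring
  rw [hAv, ← hyy, dotProduct, Finset.mul_sum]
  exact Finset.sum_le_sum fun j _ => mul_le_mul_of_nonneg_right (hmin j) (mul_self_nonneg _)

lemma Matrix.hasEigenvalue_toLin'_inv {A : Matrix n n ℝ} (hA : IsUnit A) {μ : ℝ}
    {u : n → ℝ} (hu : u ≠ 0) (hAu : A *ᵥ u = μ • u) :
    Module.End.HasEigenvalue (Matrix.toLin' A⁻¹) μ⁻¹ := by
  have hinvA : A⁻¹ *ᵥ (A *ᵥ u) = u := by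
    rw [Matrix.mulVec_mulVec, Matrix.nonsing_inv_mul _ ((Matrix.isUnit_iff_isUnit_det _).1 hA),
      Matrix.one_mulVec]
  have hμ : μ ≠ 0 := by
    rintro rfl
    rw [hAu, zero_smul, Matrix.mulVec_zero] at hinvA
    exact hu hinvA.symm
  refine Module.End.hasEigenvalue_of_hasEigenvector ⟨Module.End.mem_eigenspace_iff.2 ?_, hu⟩
  rw [Matrix.toLin'_apply, ← inv_smul_smul₀ hμ (A⁻¹ *ᵥ u), ← Matrix.mulVec_smul, ← hAu, hinvA]

/-- Courant–Fischer for the largest eigenvalue of `A⁻¹`: it is `1 / λ_min(A)`, and `λ_min(A)` is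
the minimum of the Rayleigh quotient of `A`. -/
lemma Matrix.PosDef.exists_hasEigenvalue_inv_ge [Nonempty n] {A : Matrix n n ℝ}
    (hA : A.PosDef) : ∃ μ, Module.End.HasEigenvalue (Matrix.toLin' A⁻¹) μ ∧ 0 < μ ∧
      ∀ v, v ⬝ᵥ v ≤ μ * (v ⬝ᵥ (A *ᵥ v)) := by
  obtain ⟨i, hmin⟩ := Finite.exists_min hA.1.eigenvalues
  have hpos := hA.eigenvalues_pos i
  have hu : (hA.1.eigenvectorBasis i).ofLp ≠ 0 := by
    simpa using hA.1.eigenvectorBasis.orthonormal.ne_zero i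
  refine ⟨(hA.1.eigenvalues i)⁻¹, Matrix.hasEigenvalue_toLin'_inv hA.isUnit hu
    (hA.1.mulVec_eigenvectorBasis i), inv_pos.2 hpos, fun v => ?_⟩
  rw [inv_mul_eq_div, le_div_iff₀' hpos]
  exact hA.1.eigenvalues_mul_dotProduct_self_le hmin v

end Spectral

theorem theorem_Cd_general {d : ℕ} (M σ : ℝ)
    (F : (Fin d → ℝ) → Matrix (Fin d) (Fin d) ℝ)
    (f : (Fin d → ℝ) → (Fin d → ℝ)) (w : (Fin d → ℝ) → (Fin d → ℝ))
    (hM : ∀ y, vnorm (w y) ≤ M)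
    (hσ : ∀ y : Fin d → ℝ, (∀ n, IsUnit (jacCoc F f y n)) →
      ∀ m : ℕ, ∑ i ∈ Finset.range m, opNorm ((jacCoc F f y (i + 1))⁻¹) ≤ σ)
    (x : Fin d → ℝ) (hx : ∀ n, IsUnit (jacCoc F f x n))
    (N : ℕ)
    (hpos : (normalMatrix F f w x N).PosDef) :
    ∃ μ : ℝ, Module.End.HasEigenvalue (Matrix.toLin' (normalMatrix F f w x N)⁻¹) μ ∧
      1 / ((M * σ) ^ 2 * (N + 1)) ≤ μ := by
  obtain ⟨μ, hμ, hμpos, hRayleigh⟩ := hpos.exists_hasEigenvalue_inv_ge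
  refine ⟨μ, hμ, ?_⟩
  set v := testVector F f w x N
  have hterm : ∀ n ∈ Finset.range (N + 1),
      vnorm (augment (jacCoc F f x n) (parDer F f w x n) *ᵥ v) ^ 2 ≤ (M * σ) ^ 2 := by
    intro n hn
    rw [augment_mulVec_testVector F f w hx (Finset.mem_range_succ_iff.mp hn)]
    exact pow_le_pow_left₀ (vnorm_nonneg _)
      (vnorm_partialL_le F f w hM _ _ (hσ _ (isUnit_jacCoc_iterate F f hx n) _)) 2
  have hquad : v ⬝ᵥ (normalMatrix F f w x N *ᵥ v) ≤ (M * σ) ^ 2 * (N + 1) := by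
    rw [dotProduct_normalMatrix_mulVec]
    refine (Finset.sum_le_sum hterm).trans_eq ?_
    simp [mul_comm]
  have hone : 1 ≤ μ * ((M * σ) ^ 2 * (N + 1)) :=
    ((one_le_dotProduct_testVector F f w x N).trans (hRayleigh v)).trans
      (mul_le_mul_of_nonneg_left hquad hμpos.le)
  exact div_le_of_le_mul₀ (by positivity) hμpos.le hone

/-- **Theorem C_d.** Suppose `‖∂f_k/∂k(y)‖₂ ≤ M` for all `y`, and
`S_k(y) = ∑_{i=1}^∞ ‖[F_k^i(y)]⁻¹‖₂ ≤ σ` for every point `y` whose Jacobian cocycle is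
invertible. Then for every such `x` and every `N ≥ 1`, the largest eigenvalue of the
covariance matrix `Γ̃_N(x,k) = C̃_N(x,k)⁻¹` is at least `1/((Mσ)² (N+1))`. -/
theorem theorem_Cd {d : ℕ} (M σ : ℝ) (hM0 : 0 < M) (hσ0 : 0 < σ)
    (F : (Fin d → ℝ) → Matrix (Fin d) (Fin d) ℝ)
    (f : (Fin d → ℝ) → (Fin d → ℝ)) (w : (Fin d → ℝ) → (Fin d → ℝ))
    (hM : ∀ y, vnorm (w y) ≤ M)
    (hσ : ∀ y : Fin d → ℝ, (∀ n, IsUnit (jacCoc F f y n)) →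
      ∀ m : ℕ, ∑ i ∈ Finset.range m, opNorm ((jacCoc F f y (i + 1))⁻¹) ≤ σ)
    (x : Fin d → ℝ) (hx : ∀ n, IsUnit (jacCoc F f x n))
    (N : ℕ) (hN : 1 ≤ N)
    (hpos : (normalMatrix F f w x N).PosDef) :
    ∃ μ : ℝ, Module.End.HasEigenvalue (Matrix.toLin' (normalMatrix F f w x N)⁻¹) μ ∧
      1 / ((M * σ) ^ 2 * (N + 1)) ≤ μ :=
  theorem_Cd_general M σ F f w hM hσ x hx N hpos
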